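/- With E(N, a₁, a₂) as the twist-untwist empirical error formula, if a_j = c_j/N^α with α > 1/2 and c₂ ≠ 0, then N²·E(N, c₁/N^α, c₂/N^α) → ∞ as N → ∞. -/

import Mathlib

open Real Filter

/-- Empirical (method-of-moments) error at φ = 0 of the generalized protocol. -/
noncomputable def E (N : ℕ) (a₁ a₂ : ℝ) : ℝ :=
  (2 * ((N : ℝ) + 1) - 2 * ((N : ℝ) - 1) * Real.cos (2 * (a₁ + a₂)) ^ (N - 2)) /
    ((N : ℝ) * ((N : ℝ) - 1) ^ 2 * Real.sin a₂ ^ 2 *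
      (Real.cos a₂ ^ (N - 2) + Real.cos (2 * a₁ + a₂) ^ (N - 2)) ^ 2)

/-
The numerator of `E` is at least `4` and its denominator at most `4 N³ a₂²` (from
`|sin a₂| ≤ |a₂|` and `|cos| ≤ 1`), so `N² E ≥ 1 / (N a₂²)`. With `a₂ = c₂ / N^α` this is
`N^(2α-1) / c₂²`, which diverges exactly when `α > 1/2`. The angles tend to `0`, so the cosines
in the denominator are eventually positive and the denominator does not vanish.
-/

lemma abs_cos_pow_le_one (θ : ℝ) (k : ℕ) : |Real.cos θ ^ k| ≤ 1 := by
  rw [abs_pow]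
  exact pow_le_one₀ (abs_nonneg _) (abs_cos_le_one θ)

lemma four_le_E_numerator {N : ℕ} (hN : 1 ≤ N) (θ : ℝ) :
    4 ≤ 2 * ((N : ℝ) + 1) - 2 * ((N : ℝ) - 1) * Real.cos θ ^ (N - 2) := by
  have hN' : (1 : ℝ) ≤ N := by exact_mod_cast hN
  nlinarith [(abs_le.1 (abs_cos_pow_le_one θ (N - 2))).2]

lemma E_denominator_le {N : ℕ} (hN : 1 ≤ N) (a₁ a₂ : ℝ) :
    (N : ℝ) * ((N : ℝ) - 1) ^ 2 * Real.sin a₂ ^ 2 *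
        (Real.cos a₂ ^ (N - 2) + Real.cos (2 * a₁ + a₂) ^ (N - 2)) ^ 2 ≤
      4 * (N : ℝ) ^ 3 * a₂ ^ 2 := by
  have hN' : (1 : ℝ) ≤ N := by exact_mod_cast hN
  have hsum : (Real.cos a₂ ^ (N - 2) + Real.cos (2 * a₁ + a₂) ^ (N - 2)) ^ 2 ≤ 2 ^ 2 := by
    rw [← sq_abs]
    gcongr
    exact (abs_add_le _ _).trans
      (by linarith [abs_cos_pow_le_one a₂ (N - 2), abs_cos_pow_le_one (2 * a₁ + a₂) (N - 2)])
  have hsin : Real.sin a₂ ^ 2 ≤ a₂ ^ 2 := by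
    rw [← sq_abs, ← sq_abs a₂]
    exact pow_le_pow_left₀ (abs_nonneg _) abs_sin_le_abs 2
  calc (N : ℝ) * ((N : ℝ) - 1) ^ 2 * Real.sin a₂ ^ 2 *
        (Real.cos a₂ ^ (N - 2) + Real.cos (2 * a₁ + a₂) ^ (N - 2)) ^ 2
      ≤ (N : ℝ) * (N : ℝ) ^ 2 * a₂ ^ 2 * 2 ^ 2 := by
        gcongr
        linarith
    _ = 4 * (N : ℝ) ^ 3 * a₂ ^ 2 := by ring

lemma E_denominator_pos {N : ℕ} (hN : 2 ≤ N) {a₁ a₂ : ℝ} (ha₂ : a₂ ∈ Set.Ioo 0 (π / 2))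
    (ha : 2 * a₁ + a₂ ∈ Set.Ioo (-(π / 2)) (π / 2)) :
    0 < (N : ℝ) * ((N : ℝ) - 1) ^ 2 * Real.sin a₂ ^ 2 *
        (Real.cos a₂ ^ (N - 2) + Real.cos (2 * a₁ + a₂) ^ (N - 2)) ^ 2 := by
  have hN' : (2 : ℝ) ≤ N := by exact_mod_cast hN
  have hsin : 0 < Real.sin a₂ := sin_pos_of_pos_of_lt_pi ha₂.1 (by linarith [ha₂.2, pi_pos])
  have hcos₂ : 0 < Real.cos a₂ := cos_pos_of_mem_Ioo ⟨by linarith [ha₂.1, pi_pos], ha₂.2⟩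
  have hcos : 0 < Real.cos (2 * a₁ + a₂) := cos_pos_of_mem_Ioo ha
  have : 0 < ((N : ℝ) - 1) ^ 2 := by nlinarith
  positivity

lemma one_div_le_E {N : ℕ} (hN : 2 ≤ N) {a₁ a₂ : ℝ} (ha₂ : a₂ ∈ Set.Ioo 0 (π / 2))
    (ha : 2 * a₁ + a₂ ∈ Set.Ioo (-(π / 2)) (π / 2)) :
    1 / ((N : ℝ) ^ 3 * a₂ ^ 2) ≤ E N a₁ a₂ := by
  have hN1 : 1 ≤ N := by omega
  calc 1 / ((N : ℝ) ^ 3 * a₂ ^ 2) = 4 / (4 * (N : ℝ) ^ 3 * a₂ ^ 2) := by ring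
    _ ≤ E N a₁ a₂ := by
        unfold E
        gcongr ?_ / ?_
        · linarith [four_le_E_numerator hN1 (2 * (a₁ + a₂))]
        · exact E_denominator_pos hN ha₂ ha
        · exact four_le_E_numerator hN1 _
        · exact E_denominator_le hN1 a₁ a₂

theorem stmt_8_general (α c₁ c₂ : ℝ) (hα : 1 / 2 < α) (hc₂ : 0 < c₂) :
    Tendsto (fun N : ℕ =>
        (N : ℝ) ^ 2 * E N (c₁ / (N : ℝ) ^ α) (c₂ / (N : ℝ) ^ α))
      atTop atTop := by
  have hpow : Tendsto (fun N : ℕ => (N : ℝ) ^ α) atTop atTop :=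
    (tendsto_rpow_atTop (by linarith)).comp tendsto_natCast_atTop_atTop
  have hsmall : ∀ c : ℝ, ∀ᶠ N : ℕ in atTop, c / (N : ℝ) ^ α ∈ Set.Ioo (-(π / 2)) (π / 2) :=
    fun c => (tendsto_const_nhds.div_atTop hpow).eventually
      (Ioo_mem_nhds (by linarith [pi_pos]) (by linarith [pi_pos]))
  have hlower : Tendsto (fun N : ℕ => (N : ℝ) ^ (2 * α - 1) / c₂ ^ 2) atTop atTop :=
    ((tendsto_rpow_atTop (by linarith)).comp tendsto_natCast_atTop_atTop).atTop_div_const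
      (by positivity)
  refine tendsto_atTop_mono' atTop ?_ hlower
  filter_upwards [eventually_ge_atTop 2, hsmall c₂, hsmall (2 * c₁ + c₂)] with N hN h₂ h₁₂
  have hN0 : (0 : ℝ) < N := by positivity
  have ha₂ : c₂ / (N : ℝ) ^ α ∈ Set.Ioo 0 (π / 2) := ⟨by positivity, h₂.2⟩
  have ha : 2 * (c₁ / (N : ℝ) ^ α) + c₂ / (N : ℝ) ^ α ∈ Set.Ioo (-(π / 2)) (π / 2) := by
    rwa [← mul_div_assoc, ← add_div]
  calc (N : ℝ) ^ (2 * α - 1) / c₂ ^ 2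
      = (N : ℝ) ^ 2 * (1 / ((N : ℝ) ^ 3 * (c₂ / (N : ℝ) ^ α) ^ 2)) := by
        rw [rpow_sub hN0, rpow_one, div_pow, ← rpow_natCast ((N : ℝ) ^ α), ← rpow_mul hN0.le]
        field_simp
        push_cast
        ring_nf
    _ ≤ (N : ℝ) ^ 2 * E N (c₁ / (N : ℝ) ^ α) (c₂ / (N : ℝ) ^ α) := by
        gcongr
        exact one_div_le_E hN ha₂ ha

/-- If a_j = c_j/N^α with α > 1/2 and c₁ < 0 < c₂, then N²·E(N, a₁, a₂) → ∞. -/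
theorem stmt_8 (α c₁ c₂ : ℝ) (hα : 1 / 2 < α) (hc₁ : c₁ < 0) (hc₂ : 0 < c₂) :
    Tendsto (fun N : ℕ =>
        (N : ℝ) ^ 2 * E N (c₁ / (N : ℝ) ^ α) (c₂ / (N : ℝ) ^ α))
      atTop atTop :=
  stmt_8_general α c₁ c₂ hα hc₂
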